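/- The function u(t,x) := m(x) on R x R is not a viscosity subsolution of the equation ∂u/∂t + ∂u/∂x - (∂u/∂x)^3 - x = 0. Explicitly, for the smooth test function φ(t,x) := -1/4 + x/sqrt(3), the difference u - φ attains a local maximum at every point (t0, 0), and ∂φ/∂t(t0,0) + ∂φ/∂x(t0,0) - (∂φ/∂x(t0,0))^3 - 0 = 2/(3*sqrt(3)) > 0, so the subsolution inequality fails at (t0,0). -/

import Mathlib

/-! Testing the infimum with `s = ±1` gives `m x ≤ -1/4 - (3/4)|x|`, and Young's inequality
`|s|^{4/3} ≤ (2 s² + 1)/3` gives `m 0 = -1/4`. As the slope `1/√3` of `φ` is below `3/4`,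
`m - φ` is maximal along `x = 0`, where `φ_t + φ_x - φ_x³ = 1/√3 - 1/(3√3) = 2/(3√3) > 0`. -/

/-- `u : ℝ × ℝ → ℝ`, `u = u(t,x)`, is a viscosity subsolution of
`∂u/∂t + ∂u/∂x - (∂u/∂x)³ - x = 0` if for every `C¹` test function `φ` and every local
maximum point `(t̄,x̄)` of `u - φ` one has
`∂φ/∂t + ∂φ/∂x - (∂φ/∂x)³ - x̄ ≤ 0`. -/
def IsViscositySubsolutionOfExample (u : ℝ → ℝ → ℝ) : Prop :=
  ∀ φ : ℝ → ℝ → ℝ, ContDiff ℝ 1 (fun p : ℝ × ℝ => φ p.1 p.2) →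
    ∀ t x : ℝ, IsLocalMax (fun p : ℝ × ℝ => u p.1 p.2 - φ p.1 p.2) (t, x) →
      deriv (fun t' => φ t' x) t + deriv (fun x' => φ t x') x
        - (deriv (fun x' => φ t x') x) ^ 3 - x ≤ 0

open Real Set

/-- Young's inequality for the exponents `3/2` and `3`; with `r = t^{2/3}` it is
`(r - a)² (2 r + a) ≥ 0`. -/
lemma rpow_four_thirds_le {a t : ℝ} (ha : 0 < a) (ht : 0 ≤ t) :
    t ^ ((4 : ℝ) / 3) ≤ (2 * t ^ 2 + a ^ 3) / (3 * a) := by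
  set r := t ^ ((2 : ℝ) / 3) with hr
  have hr0 : 0 ≤ r := rpow_nonneg ht _
  have hr2 : r ^ 2 = t ^ ((4 : ℝ) / 3) := by
    rw [hr, ← rpow_natCast, ← rpow_mul ht]; norm_num
  have hr3 : r ^ 3 = t ^ 2 := by
    rw [hr, ← rpow_natCast, ← rpow_mul ht]; norm_num
  rw [← hr2, ← hr3, le_div_iff₀ (by positivity)]
  nlinarith [mul_nonneg (sq_nonneg (r - a)) (by linarith : 0 ≤ 2 * r + a)]

lemma four_thirds_le_sqrt_three : (4 : ℝ) / 3 ≤ √3 :=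
  le_sqrt_of_sq_le (by norm_num)

lemma one_div_sqrt_three_sub_cube :
    1 / √3 - (1 / √3) ^ 3 = 2 / (3 * √3) := by
  have h : √3 ^ 2 = 3 := sq_sqrt (by norm_num)
  field_simp
  rw [h]
  norm_num

noncomputable def minmaxSolution (x : ℝ) : ℝ :=
  ⨅ s : ℝ, ((1 / 2) * s ^ 2 - (3 / 4) * |s - x| ^ ((4 : ℝ) / 3))

lemma bddBelow_minmaxIntegrand (x : ℝ) :
    BddBelow (range fun s : ℝ => (1 / 2) * s ^ 2 - (3 / 4) * |s - x| ^ ((4 : ℝ) / 3)) := by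
  refine ⟨-x ^ 2 / 2 - 1, ?_⟩
  rintro _ ⟨s, rfl⟩
  have h := rpow_four_thirds_le two_pos (abs_nonneg (s - x))
  rw [sq_abs] at h
  nlinarith [sq_nonneg (s + x)]

lemma minmaxSolution_le (x : ℝ) : minmaxSolution x ≤ -(1 / 4) - (3 / 4) * |x| := by
  have bound_of_witness : ∀ s : ℝ, |s| = 1 → |s - x| = 1 + |x| →
      minmaxSolution x ≤ -(1 / 4) - (3 / 4) * |x| := by
    intro s hs hsx
    have h := ciInf_le (bddBelow_minmaxIntegrand x) s
    have hpow : 1 + |x| ≤ (1 + |x|) ^ ((4 : ℝ) / 3) :=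
      self_le_rpow_of_one_le (by linarith [abs_nonneg x]) (by norm_num)
    rw [← sq_abs s, hs, hsx] at h
    unfold minmaxSolution
    linarith
  rcases le_total 0 x with hx | hx
  · refine bound_of_witness (-1) (by norm_num) ?_
    rw [abs_of_nonneg hx, abs_of_nonpos (by linarith)]; ring
  · refine bound_of_witness 1 (by norm_num) ?_
    rw [abs_of_nonpos hx, abs_of_nonneg (by linarith)]; ring

lemma minmaxSolution_zero : minmaxSolution 0 = -(1 / 4) := by
  refine le_antisymm (by simpa using minmaxSolution_le 0) (le_ciInf fun s => ?_)
  have h := rpow_four_thirds_le one_pos (abs_nonneg (s - 0))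
  rw [sq_abs] at h
  nlinarith

lemma minmaxSolution_sub_div_le {b : ℝ} (hb : 4 / 3 ≤ b) (x : ℝ) :
    minmaxSolution x - x / b ≤ minmaxSolution 0 := by
  have hdiv : |x / b| ≤ (3 / 4) * |x| := by
    rw [abs_div, abs_of_pos (show 0 < b by linarith), div_le_iff₀ (by linarith)]
    nlinarith [abs_nonneg x]
  rw [minmaxSolution_zero]
  linarith [minmaxSolution_le x, neg_abs_le (x / b)]

lemma isLocalMax_minmaxSolution_sub_affine (t₀ c : ℝ) {b : ℝ} (hb : 4 / 3 ≤ b) :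
    IsLocalMax (fun p : ℝ × ℝ => minmaxSolution p.2 - (c + p.2 / b)) (t₀, 0) := by
  refine IsMaxOn.isLocalMax (s := univ) (fun p _ => ?_) Filter.univ_mem
  show minmaxSolution p.2 - (c + p.2 / b) ≤ minmaxSolution 0 - (c + 0 / b)
  rw [zero_div, add_zero]
  linarith [minmaxSolution_sub_div_le hb p.2]

/-- `u(t,x) := m(x)` is not a viscosity subsolution of
`∂u/∂t + ∂u/∂x - (∂u/∂x)³ - x = 0`: for the smooth test function
`φ(t,x) = -1/4 + x/√3`, `u - φ` has a local maximum at every `(t₀, 0)`, while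
`∂φ/∂t + ∂φ/∂x - (∂φ/∂x)³ - 0 = 2/(3√3) > 0`. -/
theorem m_not_viscosity_subsolution :
    let m : ℝ → ℝ := fun x =>
      ⨅ s : ℝ, ((1 / 2) * s ^ 2 - (3 / 4) * |s - x| ^ ((4 : ℝ) / 3))
    let φ : ℝ → ℝ → ℝ := fun _ x => -(1 / 4) + x / Real.sqrt 3
    ¬ IsViscositySubsolutionOfExample (fun _ x => m x) ∧
    ContDiff ℝ 1 (fun p : ℝ × ℝ => φ p.1 p.2) ∧
    (∀ t₀ : ℝ, IsLocalMax (fun p : ℝ × ℝ => m p.2 - φ p.1 p.2) (t₀, 0)) ∧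
    (∀ t₀ : ℝ,
      deriv (fun t' => φ t' 0) t₀ + deriv (fun x' => φ t₀ x') 0
        - (deriv (fun x' => φ t₀ x') 0) ^ 3 - 0 = 2 / (3 * Real.sqrt 3)) ∧
    0 < 2 / (3 * Real.sqrt 3) := by
  intro m φ
  have hC1 : ContDiff ℝ 1 (fun p : ℝ × ℝ => φ p.1 p.2) :=
    contDiff_const.add (contDiff_snd.div_const _)
  have hmax : ∀ t₀ : ℝ, IsLocalMax (fun p : ℝ × ℝ => m p.2 - φ p.1 p.2) (t₀, 0) :=
    fun t₀ => isLocalMax_minmaxSolution_sub_affine t₀ _ four_thirds_le_sqrt_three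
  have hval : ∀ t₀ : ℝ,
      deriv (fun t' => φ t' 0) t₀ + deriv (fun x' => φ t₀ x') 0
        - (deriv (fun x' => φ t₀ x') 0) ^ 3 - 0 = 2 / (3 * Real.sqrt 3) := by
    intro t₀
    simp only [φ, deriv_const, deriv_const_add, deriv_div_const, deriv_id'']
    simpa using one_div_sqrt_three_sub_cube
  have hpos : 0 < 2 / (3 * Real.sqrt 3) := by positivity
  refine ⟨fun h => ?_, hC1, hmax, hval, hpos⟩
  exact (h φ hC1 0 0 (hmax 0)).not_gt (hval 0 ▸ hpos)
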